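/- arXiv:2310.19120 — 3 statements merged into one kernel-verified Lean document; each statement's English description precedes it below -/
import Mathlib

section
/- Let n be an odd positive integer and let β : ℕ → ℕ satisfy β i = 0 for all i > n and β (n - i) = β i for all 0 ≤ i ≤ n. Then 4 · ∑_{l=0}^{(n-1)/2} ∑_{(i,j) : i+j=2l} β i · β j = (∑_{i=0}^{n} β i)², where the inner sum ranges over all ordered pairs of nonnegative integers (i,j) with i + j = 2l. -/
/-!
Sum `β i * β j` over the square `[0, n]²`; the total is `B²`. The reflection `i ↦ n - i`
preserves the weights and, `n` being odd, exchanges the pairs with `i + j` odd and even, so the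
even pairs carry `B² / 2`. The reflection `(i, j) ↦ (n - i, n - j)` maps the antidiagonal
`i + j = 2l` onto `i + j = 2(n - l)`, and `l ↦ n - l` exchanges `l ≤ (n - 1) / 2` with
`l > (n - 1) / 2`, so the even antidiagonals with `l ≤ (n - 1) / 2` carry half of that.
-/

open Finset

theorem Finset.sum_range_add_self_of_reflect {M : Type*} [AddCommMonoid M] {f : ℕ → M} {m : ℕ}
    (hf : ∀ l < m, f (m + (m - 1 - l)) = f l) :
    ∑ l ∈ range (m + m), f l = 2 • ∑ l ∈ range m, f l := by
  rw [sum_range_add, two_nsmul, ← sum_range_reflect (fun l => f (m + l))]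
  congr 1
  exact sum_congr rfl fun l hl => hf l (mem_range.mp hl)

namespace PoincareSymmetric

variable {R : Type*} [CommSemiring R] {β : ℕ → R} {n : ℕ}

theorem sum_antidiagonal_eq_sum_filter_product (hvanish : ∀ i, n < i → β i = 0) (k : ℕ) :
    ∑ p ∈ antidiagonal k, β p.1 * β p.2 =
      ∑ p ∈ (range (n + 1) ×ˢ range (n + 1)).filter (fun p => p.1 + p.2 = k),
        β p.1 * β p.2 := by
  refine (sum_subset (fun p hp => ?_) fun p hp hp' => ?_).symm
  · simpa using (mem_filter.mp hp).2
  · simp only [mem_filter, mem_product, mem_range, mem_antidiagonal.mp hp, and_true,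
      not_and_or, not_lt] at hp'
    rcases hp' with h | h
    · rw [hvanish _ h, zero_mul]
    · rw [hvanish _ h, mul_zero]

theorem sum_antidiagonal_two_mul_sub (hvanish : ∀ i, n < i → β i = 0)
    (hsym : ∀ i, i ≤ n → β (n - i) = β i) {k : ℕ} (hk : k ≤ 2 * n) :
    ∑ p ∈ antidiagonal (2 * n - k), β p.1 * β p.2 =
      ∑ p ∈ antidiagonal k, β p.1 * β p.2 := by
  simp only [sum_antidiagonal_eq_sum_filter_product hvanish]
  refine sum_nbij' (fun p => (n - p.1, n - p.2)) (fun p => (n - p.1, n - p.2)) ?_ ?_ ?_ ?_ ?_ <;>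
    intro p hp <;> simp only [mem_filter, mem_product, mem_range, Prod.ext_iff] at hp ⊢
  any_goals omega
  rw [hsym _ (by omega), hsym _ (by omega)]

theorem sum_filter_odd_eq_sum_filter_even (hn : Odd n)
    (hsym : ∀ i, i ≤ n → β (n - i) = β i) :
    ∑ p ∈ (range (n + 1) ×ˢ range (n + 1)).filter (fun p => ¬Even (p.1 + p.2)),
        β p.1 * β p.2 =
      ∑ p ∈ (range (n + 1) ×ˢ range (n + 1)).filter (fun p => Even (p.1 + p.2)),
        β p.1 * β p.2 := by
  rw [Nat.odd_iff] at hn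
  refine sum_nbij' (fun p => (n - p.1, p.2)) (fun p => (n - p.1, p.2)) ?_ ?_ ?_ ?_ ?_ <;>
    intro p hp <;>
    simp only [mem_filter, mem_product, mem_range, Nat.even_iff, Prod.ext_iff, and_true] at hp ⊢
  any_goals omega
  rw [hsym _ (by omega)]

theorem sum_filter_even_eq_sum_antidiagonal (hvanish : ∀ i, n < i → β i = 0) :
    ∑ p ∈ (range (n + 1) ×ˢ range (n + 1)).filter (fun p => Even (p.1 + p.2)),
        β p.1 * β p.2 =
      ∑ l ∈ range (n + 1), ∑ p ∈ antidiagonal (2 * l), β p.1 * β p.2 := by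
  rw [← sum_fiberwise_of_maps_to (g := fun p => (p.1 + p.2) / 2) (t := range (n + 1))]
  · refine sum_congr rfl fun l _ => ?_
    rw [sum_antidiagonal_eq_sum_filter_product hvanish, filter_filter]
    congr 1
    ext p
    simp only [mem_filter, mem_product, mem_range, Nat.even_iff]
    omega
  · intro p hp
    simp only [mem_filter, mem_product, mem_range] at hp ⊢
    omega

theorem sq_sum_eq_two_mul_sum_antidiagonal_even (hn : Odd n) (hvanish : ∀ i, n < i → β i = 0)
    (hsym : ∀ i, i ≤ n → β (n - i) = β i) :
    (∑ i ∈ range (n + 1), β i) ^ 2 =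
      2 * ∑ l ∈ range (n + 1), ∑ p ∈ antidiagonal (2 * l), β p.1 * β p.2 := by
  rw [sq, sum_mul_sum, ← sum_product',
    ← sum_filter_add_sum_filter_not _ (fun p => Even (p.1 + p.2)),
    sum_filter_odd_eq_sum_filter_even hn hsym, sum_filter_even_eq_sum_antidiagonal hvanish, two_mul]

end PoincareSymmetric

open PoincareSymmetric in
theorem stmt_0_general (n : ℕ) (hn : Odd n) (β : ℕ → ℕ)
    (hvanish : ∀ i, n < i → β i = 0)
    (hsym : ∀ i, i ≤ n → β (n - i) = β i) :
    4 * ∑ l ∈ Finset.range ((n - 1) / 2 + 1),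
        ∑ p ∈ Finset.HasAntidiagonal.antidiagonal (2 * l), β p.1 * β p.2 =
      (∑ i ∈ Finset.range (n + 1), β i) ^ 2 := by
  obtain ⟨m, rfl⟩ := id hn
  have hhalf : (2 * m + 1 - 1) / 2 + 1 = m + 1 := by omega
  have hreflect : ∀ l < m + 1,
      ∑ p ∈ antidiagonal (2 * (m + 1 + (m + 1 - 1 - l))), β p.1 * β p.2 =
        ∑ p ∈ antidiagonal (2 * l), β p.1 * β p.2 := fun l hl => by
    rw [← sum_antidiagonal_two_mul_sub hvanish hsym (k := 2 * l) (by omega)]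
    congr 2
    omega
  rw [hhalf, sq_sum_eq_two_mul_sum_antidiagonal_even hn hvanish hsym,
    show 2 * m + 1 + 1 = m + 1 + (m + 1) by ring, sum_range_add_self_of_reflect hreflect,
    smul_eq_mul]
  ring

theorem stmt_0 (n : ℕ) (hn : Odd n) (hpos : 0 < n) (β : ℕ → ℕ)
    (hvanish : ∀ i, n < i → β i = 0)
    (hsym : ∀ i, i ≤ n → β (n - i) = β i) :
    4 * ∑ l ∈ Finset.range ((n - 1) / 2 + 1),
        ∑ p ∈ Finset.HasAntidiagonal.antidiagonal (2 * l), β p.1 * β p.2 =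
      (∑ i ∈ Finset.range (n + 1), β i) ^ 2 :=
  stmt_0_general n hn β hvanish hsym
end

section
/- Let n be an odd positive integer and let β : ℕ → ℕ satisfy β i = 0 for all i > n and β (n - i) = β i for all 0 ≤ i ≤ n. Set β_even = ∑_{i : 2i ≤ n} β (2i) and β_odd = ∑_{i : 2i+1 ≤ n} β (2i+1). Then 2 · ∑_{l=0}^{(n-1)/2} ∑_{(i,j) : i+j=2l} β i · β j = β_even² + β_odd², where the inner sum ranges over all ordered pairs of nonnegative integers (i,j) with i + j = 2l. -/
/-!
With `P(t) = ∑_{i ≤ n} β i tⁱ`, the inner sums are the coefficients of `P²`. Poincaré duality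
makes `P` palindromic of degree `n`, hence `P²` palindromic of degree `2n`; since `n` is odd,
`k ↦ 2n - k` exchanges the even degrees `≤ n - 1` with the even degrees `≥ n + 1`. So twice the
left-hand side is the sum of all even coefficients of `P²`, which is
`(P(1)² + P(-1)²) / 2 = ((β_even + β_odd)² + (β_even - β_odd)²) / 2 = β_even² + β_odd²`.
-/

open Finset Polynomial

theorem Finset.sum_range_two_mul {M : Type*} [AddCommMonoid M] (f : ℕ → M) (n : ℕ) :
    ∑ i ∈ range (2 * n), f i = ∑ i ∈ range n, (f (2 * i) + f (2 * i + 1)) := by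
  induction n with
  | zero => simp
  | succ n ih =>
    rw [mul_add, mul_one, sum_range_succ, sum_range_succ, sum_range_succ, ih, add_assoc]

theorem Finset.sum_range_eq_two_nsmul_of_symm {M : Type*} [AddCommMonoid M] (f : ℕ → M)
    (m : ℕ) (hf : ∀ l ≤ 2 * m + 1, f (2 * m + 1 - l) = f l) :
    ∑ l ∈ range (2 * m + 2), f l = 2 • ∑ l ∈ range (m + 1), f l := by
  have hhigh : ∑ l ∈ range (m + 1), f (m + 1 + l) = ∑ l ∈ range (m + 1), f l := by
    rw [← sum_range_reflect]
    refine sum_congr rfl fun l hl => ?_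
    rw [mem_range] at hl
    rw [← hf l (by omega)]
    congr 1
    omega
  rw [show 2 * m + 2 = (m + 1) + (m + 1) by ring, sum_range_add, hhigh, two_nsmul]

theorem Polynomial.two_mul_sum_coeff_even {R : Type*} [Ring R] (Q : R[X]) {d : ℕ}
    (hQ : Q.natDegree < 2 * d) :
    2 * ∑ l ∈ range d, Q.coeff (2 * l) = Q.eval 1 + Q.eval (-1) := by
  rw [eval_eq_sum_range' hQ, eval_eq_sum_range' hQ, sum_range_two_mul, sum_range_two_mul,
    ← sum_add_distrib, mul_sum]
  refine sum_congr rfl fun l _ => ?_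
  simp only [one_pow, mul_one, (even_two_mul l).neg_one_pow, (odd_two_mul_add_one l).neg_one_pow,
    mul_neg_one]
  rw [two_mul (Q.coeff _)]
  abel

noncomputable def poincarePolynomial {R : Type*} [Semiring R] (b : ℕ → R) (n : ℕ) : R[X] :=
  ∑ i ∈ range (n + 1), C (b i) * X ^ i

section poincarePolynomial

variable {R : Type*} [Semiring R] (b : ℕ → R) (n : ℕ)

theorem coeff_poincarePolynomial (i : ℕ) :
    (poincarePolynomial b n).coeff i = if i ≤ n then b i else 0 := by
  simp [poincarePolynomial]

theorem natDegree_poincarePolynomial_le : (poincarePolynomial b n).natDegree ≤ n :=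
  natDegree_le_iff_coeff_eq_zero.2 fun i hi => by
    rw [coeff_poincarePolynomial, if_neg (not_le.2 (by exact_mod_cast hi))]

theorem reflect_poincarePolynomial (hb : ∀ i ≤ n, b (n - i) = b i) :
    reflect n (poincarePolynomial b n) = poincarePolynomial b n := by
  ext i
  rw [coeff_reflect, coeff_poincarePolynomial, coeff_poincarePolynomial]
  by_cases hi : i ≤ n
  · rw [revAt_le hi, if_pos (Nat.sub_le n i), if_pos hi, hb i hi]
  · rw [revAt_eq_self_of_lt (not_le.1 hi), if_neg hi]

theorem coeff_poincarePolynomial_sq_of_le {k : ℕ} (hk : k ≤ n) :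
    (poincarePolynomial b n ^ 2).coeff k = ∑ p ∈ antidiagonal k, b p.1 * b p.2 := by
  rw [sq, coeff_mul]
  refine sum_congr rfl fun p hp => ?_
  rw [HasAntidiagonal.mem_antidiagonal] at hp
  rw [coeff_poincarePolynomial, coeff_poincarePolynomial, if_pos (by omega), if_pos (by omega)]

theorem eval_poincarePolynomial_two_mul_add_one (m : ℕ) (x : R) :
    (poincarePolynomial b (2 * m + 1)).eval x =
      ∑ i ∈ range (m + 1), (b (2 * i) * x ^ (2 * i) + b (2 * i + 1) * x ^ (2 * i + 1)) := by
  rw [← sum_range_two_mul (fun i => b i * x ^ i), show 2 * (m + 1) = 2 * m + 1 + 1 by ring]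
  simp [poincarePolynomial, eval_finsetSum]

theorem coeff_poincarePolynomial_sq_two_mul_sub (hb : ∀ i ≤ n, b (n - i) = b i) {k : ℕ}
    (hk : k ≤ 2 * n) :
    (poincarePolynomial b n ^ 2).coeff (2 * n - k) = (poincarePolynomial b n ^ 2).coeff k := by
  have hdeg := natDegree_poincarePolynomial_le b n
  have hpalin : reflect (2 * n) (poincarePolynomial b n ^ 2) = poincarePolynomial b n ^ 2 := by
    rw [two_mul, sq, reflect_mul _ _ hdeg hdeg, reflect_poincarePolynomial b n hb]
  conv_rhs => rw [← hpalin, coeff_reflect, revAt_le hk]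

end poincarePolynomial

theorem stmt_1_general (n : ℕ) (hn : Odd n) (β : ℕ → ℕ)
    (hsym : ∀ i, i ≤ n → β (n - i) = β i) :
    2 * ∑ l ∈ Finset.range ((n - 1) / 2 + 1),
        ∑ p ∈ Finset.HasAntidiagonal.antidiagonal (2 * l), β p.1 * β p.2 =
      (∑ i ∈ Finset.range (n / 2 + 1), β (2 * i)) ^ 2 +
        (∑ i ∈ Finset.range ((n - 1) / 2 + 1), β (2 * i + 1)) ^ 2 := by
  obtain ⟨m, rfl⟩ := hn
  rw [show (2 * m + 1 - 1) / 2 = m by omega, show (2 * m + 1) / 2 = m by omega]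
  set P := poincarePolynomial (fun i => (β i : ℤ)) (2 * m + 1)
  have hcoeff : ∀ l ∈ range (m + 1), (P ^ 2).coeff (2 * l) =
      ∑ p ∈ HasAntidiagonal.antidiagonal (2 * l), (β p.1 * β p.2 : ℤ) :=
    fun l hl => coeff_poincarePolynomial_sq_of_le _ _ (by rw [mem_range] at hl; omega)
  have hhalf : ∑ l ∈ range (2 * m + 2), (P ^ 2).coeff (2 * l) =
      2 • ∑ l ∈ range (m + 1), (P ^ 2).coeff (2 * l) := by
    refine sum_range_eq_two_nsmul_of_symm _ m fun l hl => ?_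
    rw [← coeff_poincarePolynomial_sq_two_mul_sub _ _ (fun i hi => by exact_mod_cast hsym i hi)
      (show 2 * l ≤ 2 * (2 * m + 1) by omega)]
    congr 1
    omega
  have hsum := two_mul_sum_coeff_even (P ^ 2) (d := 2 * m + 2)
    ((natDegree_pow_le_of_le 2 (natDegree_poincarePolynomial_le _ _)).trans_lt (by omega))
  have hone : P.eval 1 =
      ∑ i ∈ range (m + 1), (β (2 * i) : ℤ) + ∑ i ∈ range (m + 1), (β (2 * i + 1) : ℤ) := by
    simp [P, eval_poincarePolynomial_two_mul_add_one, sum_add_distrib]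
  have hnegone : P.eval (-1) =
      ∑ i ∈ range (m + 1), (β (2 * i) : ℤ) - ∑ i ∈ range (m + 1), (β (2 * i + 1) : ℤ) := by
    simp [P, eval_poincarePolynomial_two_mul_add_one, pow_succ, pow_mul, ← sub_eq_add_neg,
      sum_sub_distrib]
  rw [hhalf, eval_pow, eval_pow, hone, hnegone, sum_congr rfl hcoeff, nsmul_eq_mul] at hsum
  zify
  refine mul_left_cancel₀ (two_ne_zero (α := ℤ)) ?_
  linear_combination hsum

theorem stmt_1 (n : ℕ) (hn : Odd n) (hpos : 0 < n) (β : ℕ → ℕ)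
    (hvanish : ∀ i, n < i → β i = 0)
    (hsym : ∀ i, i ≤ n → β (n - i) = β i) :
    2 * ∑ l ∈ Finset.range ((n - 1) / 2 + 1),
        ∑ p ∈ Finset.HasAntidiagonal.antidiagonal (2 * l), β p.1 * β p.2 =
      (∑ i ∈ Finset.range (n / 2 + 1), β (2 * i)) ^ 2 +
        (∑ i ∈ Finset.range ((n - 1) / 2 + 1), β (2 * i + 1)) ^ 2 :=
  stmt_1_general n hn β hsym
end

section
/- Let n be an even positive integer and let β : ℕ → ℕ satisfy β i = 0 for all i > n and β (n - i) = β i for all 0 ≤ i ≤ n. Set β_even = ∑_{i : 2i ≤ n} β (2i) and β_odd = ∑_{i : 2i+1 ≤ n} β (2i+1). Then 2 · ∑_{l=1}^{n/2} ∑_{(a,b) : a+b=2l-1, a<b} β a · β b = β_even · β_odd, where the inner sum ranges over all pairs of nonnegative integers (a,b) with a + b = 2l - 1 and a < b. -/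
/-!
Doubling the inner sum turns the left side into `∑ β a * β b` over all pairs with `a + b` odd and
`a + b < n`. The right side is the same kind of sum over pairs with `a` even and `b` odd. Those
with `a + b < n` already occur on the left; those with `a + b > n` are carried by the duality
`(a, b) ↦ (n - b, n - a)`, which keeps `β a * β b` fixed, onto the pairs on the left with `a` odd.
-/

open Finset

variable {R : Type*} [CommSemiring R]

theorem two_mul_sum_antidiagonal_filter_lt_of_odd {k : ℕ} (hk : Odd k) (f : ℕ → R) :
    2 * ∑ p ∈ (antidiagonal k).filter (fun p => p.1 < p.2), f p.1 * f p.2 =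
      ∑ p ∈ antidiagonal k, f p.1 * f p.2 := by
  obtain ⟨j, rfl⟩ := hk
  rw [two_mul, ← sum_filter_add_sum_filter_not (antidiagonal _) (fun p => p.1 < p.2)]
  congr 1
  refine sum_nbij' Prod.swap Prod.swap ?_ ?_ (by simp) (by simp) (fun p _ => mul_comm _ _) <;>
  · intro p hp
    simp only [mem_filter, HasAntidiagonal.mem_antidiagonal, Prod.fst_swap, Prod.snd_swap] at hp ⊢
    omega

theorem sum_range_two_mul_eq_sum_filter_even (f : ℕ → R) (m : ℕ) :
    ∑ i ∈ range (m + 1), f (2 * i) = ∑ a ∈ (range (2 * m + 1)).filter Even, f a := by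
  refine sum_nbij' (2 * ·) (· / 2) ?_ ?_ ?_ ?_ (fun _ _ => rfl) <;>
  · intro a ha
    simp only [mem_filter, mem_range, Nat.even_iff] at ha ⊢
    omega

theorem sum_range_two_mul_add_one_eq_sum_filter_odd (f : ℕ → R) (m : ℕ) :
    ∑ i ∈ range m, f (2 * i + 1) = ∑ a ∈ (range (2 * m + 1)).filter Odd, f a := by
  refine sum_nbij' (2 * · + 1) (· / 2) ?_ ?_ ?_ ?_ (fun _ _ => rfl) <;>
  · intro a ha
    simp only [mem_filter, mem_range, Nat.odd_iff] at ha ⊢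
    omega

theorem sum_Icc_sum_antidiagonal_two_mul_sub_one (g : ℕ × ℕ → R) (m : ℕ) :
    ∑ l ∈ Icc 1 m, ∑ p ∈ antidiagonal (2 * l - 1), g p =
      ∑ p ∈ (range (2 * m + 1) ×ˢ range (2 * m + 1)).filter
        (fun p => Odd (p.1 + p.2) ∧ p.1 + p.2 < 2 * m), g p := by
  have hdisj : (Icc 1 m : Set ℕ).PairwiseDisjoint (fun l => antidiagonal (2 * l - 1)) := by
    intro k _ l _ hkl
    simp only [Function.onFun, disjoint_left, HasAntidiagonal.mem_antidiagonal]
    intro p hk hl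
    omega
  rw [← sum_biUnion hdisj]
  congr 1
  ext ⟨a, b⟩
  simp only [mem_biUnion, mem_Icc, HasAntidiagonal.mem_antidiagonal, mem_filter, mem_product,
    mem_range, Nat.odd_iff]
  constructor
  · rintro ⟨l, hl, hab⟩
    omega
  · intro hab
    exact ⟨(a + b + 1) / 2, by omega, by omega⟩

theorem sum_filter_even_odd_eq_sum_filter_odd_add_lt {n : ℕ} (hn : Even n) (f : ℕ → R)
    (hf : ∀ i ≤ n, f (n - i) = f i) :
    ∑ p ∈ (range (n + 1) ×ˢ range (n + 1)).filter (fun p => Even p.1 ∧ Odd p.2), f p.1 * f p.2 =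
      ∑ p ∈ (range (n + 1) ×ˢ range (n + 1)).filter (fun p => Odd (p.1 + p.2) ∧ p.1 + p.2 < n),
        f p.1 * f p.2 := by
  set box := range (n + 1) ×ˢ range (n + 1)
  have hlt : ∑ p ∈ (box.filter fun p => Even p.1 ∧ Odd p.2).filter (fun p => p.1 + p.2 < n),
        f p.1 * f p.2 =
      ∑ p ∈ (box.filter fun p => Odd (p.1 + p.2) ∧ p.1 + p.2 < n).filter (fun p => Even p.1),
        f p.1 * f p.2 := by
    rw [filter_filter, filter_filter]
    refine sum_congr (filter_congr fun p _ => ?_) fun _ _ => rfl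
    simp only [Nat.even_iff, Nat.odd_iff]
    omega
  have hgt : ∑ p ∈ (box.filter fun p => Even p.1 ∧ Odd p.2).filter (fun p => ¬p.1 + p.2 < n),
        f p.1 * f p.2 =
      ∑ p ∈ (box.filter fun p => Odd (p.1 + p.2) ∧ p.1 + p.2 < n).filter (fun p => ¬Even p.1),
        f p.1 * f p.2 := by
    refine sum_nbij' (fun p => (n - p.2, n - p.1)) (fun p => (n - p.2, n - p.1)) ?_ ?_ ?_ ?_ ?_
    all_goals
      rintro ⟨a, b⟩ hab
      simp only [box, mem_filter, mem_product, mem_range, Nat.even_iff, Nat.odd_iff,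
        Prod.mk.injEq] at hab hn ⊢
    · omega
    · omega
    · omega
    · omega
    · rw [hf b (by omega), hf a (by omega), mul_comm]
  rw [← sum_filter_add_sum_filter_not _ (fun p => p.1 + p.2 < n), hlt, hgt,
    sum_filter_add_sum_filter_not]

theorem stmt_7_general (n : ℕ) (hn : Even n) (hpos : 0 < n) (β : ℕ → ℕ)
    (hsym : ∀ i, i ≤ n → β (n - i) = β i) :
    2 * ∑ l ∈ Finset.Icc 1 (n / 2),
        ∑ p ∈ (Finset.HasAntidiagonal.antidiagonal (2 * l - 1)).filter (fun p => p.1 < p.2),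
          β p.1 * β p.2 =
      (∑ i ∈ Finset.range (n / 2 + 1), β (2 * i)) *
        (∑ i ∈ Finset.range ((n - 1) / 2 + 1), β (2 * i + 1)) := by
  obtain ⟨m, rfl⟩ := hn.two_dvd
  have hodd : ∀ l ∈ Icc 1 m, Odd (2 * l - 1) := fun l hl => ⟨l - 1, by rw [mem_Icc] at hl; omega⟩
  rw [show 2 * m / 2 = m by omega, show (2 * m - 1) / 2 + 1 = m by omega, mul_sum,
    sum_congr rfl fun l hl => two_mul_sum_antidiagonal_filter_lt_of_odd (hodd l hl) β,
    sum_Icc_sum_antidiagonal_two_mul_sub_one, sum_range_two_mul_eq_sum_filter_even,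
    sum_range_two_mul_add_one_eq_sum_filter_odd, sum_mul_sum, ← sum_product', ← filter_product]
  exact (sum_filter_even_odd_eq_sum_filter_odd_add_lt (even_two_mul m) β hsym).symm

theorem stmt_7 (n : ℕ) (hn : Even n) (hpos : 0 < n) (β : ℕ → ℕ)
    (hvanish : ∀ i, n < i → β i = 0)
    (hsym : ∀ i, i ≤ n → β (n - i) = β i) :
    2 * ∑ l ∈ Finset.Icc 1 (n / 2),
        ∑ p ∈ (Finset.HasAntidiagonal.antidiagonal (2 * l - 1)).filter (fun p => p.1 < p.2),
          β p.1 * β p.2 =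
      (∑ i ∈ Finset.range (n / 2 + 1), β (2 * i)) *
        (∑ i ∈ Finset.range ((n - 1) / 2 + 1), β (2 * i + 1)) :=
  stmt_7_general n hn hpos β hsym
end
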